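/- arXiv:2510.03945 — 3 statements merged into one kernel-verified Lean document; each statement's English description precedes it below -/
import Mathlib

section
/- Every VZ(S)-group G is S-nilpotent of S-nilpotence class at most 2. -/
open scoped BigOperators Pointwise

/-- `f : G → ℂ` is an irreducible character of `G`. -/
def IsIrrChar (G : Type) [Group G] [Fintype G] (f : G → ℂ) : Prop :=
  ∃ V : FDRep ℂ G, CategoryTheory.Simple V ∧ V.character = f

/-- A supercharacter theory of a finite group `G` (Diaconis–Isaacs): a partition
`parts` of the set of irreducible characters of `G` together with a partition of `G`
into `S`-classes (`cls g` is the class of `g`), such that `{1}` is a class, the number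
of parts equals the number of classes, and each supercharacter
`σ_X = ∑ χ ∈ X, χ(1)·χ` is constant on every class. -/
structure SCT (G : Type) [Group G] [Fintype G] where
  parts : Finset (Finset (G → ℂ))
  cls : G → Set G
  parts_cover : ∀ f : G → ℂ, IsIrrChar G f ↔ ∃ X ∈ parts, f ∈ X
  parts_disj : ∀ X ∈ parts, ∀ Y ∈ parts, X ≠ Y → Disjoint X Y
  parts_nonempty : ∀ X ∈ parts, X.Nonempty
  mem_cls : ∀ g : G, g ∈ cls g
  cls_eq : ∀ g h : G, h ∈ cls g → cls h = cls g
  cls_one : cls (1 : G) = {1}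
  card_eq : parts.card = Nat.card (Set.range cls)
  const : ∀ X ∈ parts, ∀ g h : G, h ∈ cls g →
    (∑ χ ∈ X, χ 1 * χ h) = (∑ χ ∈ X, χ 1 * χ g)

variable {G : Type} [Group G] [Fintype G]

namespace SCT

/-- The supercharacter attached to a part `X`. -/
noncomputable def superchar (_S : SCT G) (X : Finset (G → ℂ)) : G → ℂ := fun g => ∑ χ ∈ X, χ 1 * χ g

/-- The set `Irr(S)` of `S`-characters. -/
def Irr (S : SCT G) : Set (G → ℂ) := {f | ∃ X ∈ S.parts, f = S.superchar X}

end SCT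

/-- The kernel of a character-like function `f : G → ℂ`. -/
def charKer (f : G → ℂ) : Subgroup G where
  carrier := {g | ∀ h, f (g * h) = f h}
  one_mem' := by intro h; simp
  mul_mem' := by intro a b ha hb h; rw [mul_assoc, ha, hb]
  inv_mem' := by
    intro a ha h
    have := ha (a⁻¹ * h)
    rw [mul_inv_cancel_left] at this
    exact this.symm

namespace SCT

/-- `[H,S]`, the subgroup generated by the `g⁻¹k` with `g ∈ H`, `k ∈ Cl_S(g)`. -/
def comm (S : SCT G) (H : Subgroup G) : Subgroup G :=
  Subgroup.closure {x | ∃ g ∈ H, ∃ k ∈ S.cls g, x = g⁻¹ * k}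

/-- `[G,S]`. -/
def derived (S : SCT G) : Subgroup G := S.comm ⊤

/-- `Irr(S | N)`: the `S`-characters whose kernel does not contain `N`. -/
def IrrRel (S : SCT G) (N : Subgroup G) : Set (G → ℂ) :=
  {f | f ∈ S.Irr ∧ ¬ N ≤ charKer f}

/-- `g` is an `S`-Camina element: all of `Irr(S | [G,S])` vanishes at `g`. -/
def IsCaminaElt (S : SCT G) (g : G) : Prop :=
  ∀ f ∈ S.IrrRel S.derived, f g = 0

/-- `N` is `S`-normal: a union of `S`-classes. -/
def IsNormal (S : SCT G) (N : Subgroup G) : Prop :=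
  ∀ g ∈ N, S.cls g ⊆ N

/-- `(G,N)` is a generalised `S`-Camina pair. -/
def IsGCP (S : SCT G) (N : Subgroup G) : Prop :=
  S.IsNormal N ∧ ∀ g : G, g ∉ N → S.IsCaminaElt g

/-- The set `Z(S)` of elements with singleton `S`-class. -/
def centerSet (S : SCT G) : Set G := {g | S.cls g = {g}}

/-- The vanishing-off subgroup `V(S | N)`. -/
def V (S : SCT G) (N : Subgroup G) : Subgroup G :=
  Subgroup.closure {g | ∃ f ∈ S.IrrRel N, f g ≠ 0}

/-- `V(S) = V(S | [G,S])`. -/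
def VS (S : SCT G) : Subgroup G := S.V S.derived

/-- `U(S | N)`: the product of all `S`-normal subgroups `H` with `V(S | H) ≤ N`. -/
def U (S : SCT G) (N : Subgroup G) : Subgroup G :=
  ⨆ (H : Subgroup G) (_ : S.IsNormal H ∧ S.V H ≤ N), H

/-- The upper `S`-central series: `ζ_0 = 1` and `ζ_{i+1}/ζ_i = Z(S^{G/ζ_i})`,
i.e. `ζ_{i+1}` consists of the `g` whose `S`-class maps onto the single coset `gζ_i`. -/
def zeta (S : SCT G) : ℕ → Subgroup G
  | 0 => ⊥
  | i + 1 => Subgroup.closure {g | ∀ k ∈ S.cls g, g⁻¹ * k ∈ S.zeta i}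

/-- The lower `S`-central series `γ_1 = G`, `γ_{i+1} = [γ_i, S]` (with `γ_0 := G`). -/
def gamma (S : SCT G) : ℕ → Subgroup G
  | 0 => ⊤
  | 1 => ⊤
  | n + 2 => S.comm (S.gamma (n + 1))

/-- The series `V_1(S) = V(S)`, `V_{i+1}(S) = [V_i(S), S]` (with `V_0 := V(S)`). -/
def Vseq (S : SCT G) : ℕ → Subgroup G
  | 0 => S.VS
  | 1 => S.VS
  | n + 2 => S.comm (S.Vseq (n + 1))

/-- `G` is a `VZ(S)`-group: every member of `Irr(S | [G,S])` vanishes off `Z(S)`. -/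
def IsVZ (S : SCT G) : Prop :=
  ∀ f ∈ S.IrrRel S.derived, ∀ g : G, g ∉ S.centerSet → f g = 0

end SCT

/-! Read as functions on `S`-classes, the supercharacters are orthogonal (by the orthogonality
of irreducible characters and the disjointness of the parts), hence linearly independent, and
there are as many of them as classes; so they span the `S`-class functions. Consequently the
`σ_X` have no common zero, and `∑_X σ_X` is `|G|` times the indicator of `1`.

Let `x ∈ [G,S]` lie outside `Z(S)`. Each `σ_X` either has `[G,S]` in its kernel, and then
`σ_X(x) = σ_X(1) > 0`, or vanishes at `x` by the `VZ(S)` hypothesis. As `∑_X σ_X(x) = 0`, the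
first case never occurs, so every `σ_X` vanishes at `x`: a contradiction. Hence
`[G,S] ⊆ Z(S)`, and `γ_3(S) = [[G,S],S] = 1`. -/

open scoped ComplexOrder

namespace IsIrrChar

theorem sum_mul_inv {χ ψ : G → ℂ} (hχ : IsIrrChar G χ) (hψ : IsIrrChar G ψ) :
    ∑ g, ψ g * χ g⁻¹ = if ψ = χ then (Nat.card G : ℂ) else 0 := by
  classical
  obtain ⟨V, hV, rfl⟩ := hχ
  obtain ⟨W, hW, rfl⟩ := hψ
  split_ifs with h
  · rw [h]; exact (FDRep.simple_iff_char_is_norm_one V).mp hV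
  · have := invertibleOfNonzero (NeZero.ne (Nat.card G : ℂ))
    have h0 := FDRep.char_orthonormal W V
    rw [if_neg fun ⟨i⟩ => h (FDRep.char_iso i)] at h0
    simpa using h0

theorem one_pos {χ : G → ℂ} (hχ : IsIrrChar G χ) : 0 < χ 1 := by
  obtain ⟨V, hV, rfl⟩ := hχ
  rw [FDRep.char_one]
  refine Nat.cast_pos.mpr (Nat.pos_of_ne_zero fun h0 => ?_)
  have : Subsingleton V := Module.finrank_zero_iff.mp h0
  have hzero (g : G) : V.character g = 0 := by
    change LinearMap.trace ℂ V (V.ρ g) = 0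
    rw [Subsingleton.elim (V.ρ g) 0, map_zero]
  have hnorm := (FDRep.simple_iff_char_is_norm_one V).mp hV
  rw [Finset.sum_eq_zero fun g _ => by rw [hzero, zero_mul]] at hnorm
  exact NeZero.ne (Nat.card G : ℂ) hnorm.symm

end IsIrrChar

namespace SCT

variable (S : SCT G)

theorem isIrrChar_of_mem {X : Finset (G → ℂ)} (hX : X ∈ S.parts) {χ : G → ℂ} (hχ : χ ∈ X) :
    IsIrrChar G χ :=
  (S.parts_cover χ).mpr ⟨X, hX, hχ⟩

theorem mem_cls_iff {g h : G} : h ∈ S.cls g ↔ S.cls h = S.cls g :=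
  ⟨S.cls_eq g h, fun e => e ▸ S.mem_cls h⟩

theorem eq_one_iff_cls_eq_cls_one {g : G} : g = 1 ↔ S.cls g = S.cls 1 := by
  rw [← S.mem_cls_iff, S.cls_one, Set.mem_singleton_iff]

theorem superchar_eq_of_cls_eq {X : Finset (G → ℂ)} (hX : X ∈ S.parts) {g h : G}
    (e : S.cls g = S.cls h) : S.superchar X g = S.superchar X h :=
  S.const X hX h g (S.mem_cls_iff.mpr e)

theorem superchar_one_pos {X : Finset (G → ℂ)} (hX : X ∈ S.parts) : 0 < S.superchar X 1 :=
  Finset.sum_pos (fun _ hχ => mul_pos (S.isIrrChar_of_mem hX hχ).one_pos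
    (S.isIrrChar_of_mem hX hχ).one_pos) (S.parts_nonempty X hX)

theorem sum_superchar_mul_inv {X : Finset (G → ℂ)} (hX : X ∈ S.parts) {χ : G → ℂ}
    (hχ : IsIrrChar G χ) :
    ∑ g, S.superchar X g * χ g⁻¹ = if χ ∈ X then χ 1 * Nat.card G else 0 := by
  classical
  calc ∑ g, S.superchar X g * χ g⁻¹ = ∑ ψ ∈ X, ψ 1 * ∑ g, ψ g * χ g⁻¹ := by
        simp only [superchar, Finset.sum_mul, Finset.mul_sum, mul_assoc]
        exact Finset.sum_comm
    _ = ∑ ψ ∈ X, if ψ = χ then χ 1 * Nat.card G else 0 := by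
        refine Finset.sum_congr rfl fun ψ hψ => ?_
        rw [hχ.sum_mul_inv (S.isIrrChar_of_mem hX hψ)]
        split_ifs with h <;> simp [h]
    _ = _ := Finset.sum_ite_eq' X χ _

theorem sum_combination_mul_inv (c : S.parts → ℂ) (X : S.parts) {χ : G → ℂ} (hχ : χ ∈ X.1) :
    ∑ g, (∑ Y : S.parts, c Y * S.superchar Y g) * χ g⁻¹ = c X * (χ 1 * Nat.card G) := by
  have hirr := S.isIrrChar_of_mem X.2 hχ
  simp only [Finset.sum_mul, mul_assoc]
  rw [Finset.sum_comm]
  simp only [← Finset.mul_sum]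
  rw [Finset.sum_eq_single X]
  · rw [S.sum_superchar_mul_inv X.2 hirr, if_pos hχ]
  · intro Y _ hYX
    rw [S.sum_superchar_mul_inv Y.2 hirr, if_neg, mul_zero]
    exact Finset.disjoint_right.mp (S.parts_disj _ Y.2 _ X.2 (Subtype.coe_ne_coe.mpr hYX)) hχ
  · simp

noncomputable def supercharOnClasses (X : S.parts) : Quotient (Setoid.ker S.cls) → ℂ :=
  Quotient.lift (S.superchar X) fun _ _ => S.superchar_eq_of_cls_eq X.2

theorem linearIndependent_supercharOnClasses : LinearIndependent ℂ S.supercharOnClasses := by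
  rw [Fintype.linearIndependent_iff]
  intro c hc X
  obtain ⟨χ, hχ⟩ := S.parts_nonempty X X.2
  have hzero (g : G) : ∑ Y : S.parts, c Y * S.superchar Y g = 0 := by
    simpa [supercharOnClasses] using congrFun hc ⟦g⟧
  have h := S.sum_combination_mul_inv c X hχ
  simp only [hzero, zero_mul, Finset.sum_const_zero] at h
  exact (mul_eq_zero.mp h.symm).resolve_right
    (mul_ne_zero (S.isIrrChar_of_mem X.2 hχ).one_pos.ne' (NeZero.ne _))

theorem exists_eq_sum_superchar {F : G → ℂ} (hF : ∀ g h, S.cls g = S.cls h → F g = F h) :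
    ∃ c : S.parts → ℂ, ∀ g, F g = ∑ X : S.parts, c X * S.superchar X g := by
  classical
  have hcard : Fintype.card S.parts = Module.finrank ℂ (Quotient (Setoid.ker S.cls) → ℂ) := by
    rw [Module.finrank_pi, Fintype.card_coe, S.card_eq, ← Nat.card_eq_fintype_card,
      Nat.card_congr (Setoid.quotientKerEquivRange _).symm]
  have hspan := S.linearIndependent_supercharOnClasses.span_eq_top_of_card_eq_finrank' hcard
  obtain ⟨c, hc⟩ := (Submodule.mem_span_range_iff_exists_fun ℂ).mp
    (hspan ▸ Submodule.mem_top : Quotient.lift F hF ∈ _)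
  refine ⟨c, fun g => ?_⟩
  simpa [Finset.sum_apply, supercharOnClasses] using (congrFun hc ⟦g⟧).symm

theorem exists_superchar_ne_zero (x : G) : ∃ X : S.parts, S.superchar X x ≠ 0 := by
  classical
  by_contra! h
  obtain ⟨c, hc⟩ := S.exists_eq_sum_superchar
    (F := fun g => if S.cls g = S.cls x then 1 else 0) fun g h e => by simp only [e]
  simpa [h] using hc x

theorem sum_superchar_eq_zero_of_ne_one {g : G} (hg : g ≠ 1) : ∑ X : S.parts, S.superchar X g = 0 := by
  classical
  obtain ⟨c, hc⟩ := S.exists_eq_sum_superchar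
    (F := fun g => if g = 1 then 1 else 0) fun g h e => by simp only [S.eq_one_iff_cls_eq_cls_one, e]
  -- pairing the indicator of `1` with any `χ ∈ X` gives `χ 1 = c X * χ 1 * |G|`
  have hcoeff (X : S.parts) : Nat.card G * c X = 1 := by
    obtain ⟨χ, hχ⟩ := S.parts_nonempty X X.2
    have h := S.sum_combination_mul_inv c X hχ
    simp only [← hc, ite_mul, one_mul, zero_mul, Finset.sum_ite_eq', Finset.mem_univ, if_true,
      inv_one] at h
    refine mul_right_cancel₀ (S.isIrrChar_of_mem X.2 hχ).one_pos.ne' ?_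
    linear_combination -h
  calc ∑ X : S.parts, S.superchar X g = ∑ X : S.parts, Nat.card G * (c X * S.superchar X g) :=
        Finset.sum_congr rfl fun X _ => by rw [← mul_assoc, hcoeff, one_mul]
    _ = 0 := by rw [← Finset.mul_sum, ← hc, if_neg hg, mul_zero]

theorem comm_eq_bot_of_subset_centerSet {H : Subgroup G} (hH : (H : Set G) ⊆ S.centerSet) :
    S.comm H = ⊥ := by
  rw [eq_bot_iff, comm, Subgroup.closure_le]
  rintro _ ⟨g, hg, k, hk, rfl⟩
  rw [hH hg, Set.mem_singleton_iff] at hk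
  simp [hk]

end SCT

theorem SCT.IsVZ.derived_subset_centerSet {S : SCT G} (hS : S.IsVZ) :
    (S.derived : Set G) ⊆ S.centerSet := by
  intro x hx
  by_contra hZ
  have hx1 : x ≠ 1 := by
    rintro rfl
    exact hZ S.cls_one
  have hvalue_of_le (X : S.parts) (hX : S.derived ≤ charKer (S.superchar X)) :
      S.superchar X x = S.superchar X 1 := by
    simpa using hX hx 1
  have hvalue_of_not_le (X : S.parts) (hX : ¬ S.derived ≤ charKer (S.superchar X)) :
      S.superchar X x = 0 :=
    hS _ ⟨⟨X, X.2, rfl⟩, hX⟩ x hZ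
  have hnonneg (X : S.parts) : 0 ≤ S.superchar X x := by
    by_cases hX : S.derived ≤ charKer (S.superchar X)
    · exact (hvalue_of_le X hX).symm ▸ (S.superchar_one_pos X.2).le
    · exact (hvalue_of_not_le X hX).ge
  have hnot_le (X : S.parts) : ¬ S.derived ≤ charKer (S.superchar X) := by
    intro hX
    have hpos : 0 < ∑ Y : S.parts, S.superchar Y x :=
      Finset.sum_pos' (fun Y _ => hnonneg Y)
        ⟨X, Finset.mem_univ _, (hvalue_of_le X hX).symm ▸ S.superchar_one_pos X.2⟩
    rw [S.sum_superchar_eq_zero_of_ne_one hx1] at hpos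
    exact hpos.false
  obtain ⟨X, hX⟩ := S.exists_superchar_ne_zero x
  exact hX (hvalue_of_not_le X (hnot_le X))

/-- every `VZ(S)`-group is `S`-nilpotent of class at most `2`,
i.e. `γ_3(S) = 1`. -/
theorem isVZ_gamma_three_eq_bot (S : SCT G) (h : S.IsVZ) : S.gamma 3 = ⊥ :=
  S.comm_eq_bot_of_subset_centerSet h.derived_subset_centerSet
end

section
/- Let S be a supercharacter theory of a finite group G, and let H, N be S-normal subgroups. Then H ≤ U(S | N) if and only if V(S | H) ≤ N. -/
open scoped BigOperators Pointwise

variable {G : Type} [Group G] [Fintype G]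

/-- for `S`-normal `H`, `N`: `H ≤ U(S|N) ↔ V(S|H) ≤ N`. -/
theorem le_U_iff_V_le (S : SCT G) (H N : Subgroup G)
    (hH : S.IsNormal H) (hN : S.IsNormal N) :
    H ≤ S.U N ↔ S.V H ≤ N := by
  constructor
  · intro hHU
    have hmono : S.V H ≤ S.V (S.U N) := by
      apply Subgroup.closure_mono
      rintro g ⟨f, ⟨hf, hker⟩, hg⟩
      exact ⟨f, ⟨hf, fun h => hker (hHU.trans h)⟩, hg⟩
    refine hmono.trans ?_
    rw [SCT.V, Subgroup.closure_le]
    rintro g ⟨f, ⟨hf, hker⟩, hg0⟩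
    rw [SCT.U, iSup_le_iff] at hker
    push_neg at hker
    obtain ⟨K, hKker⟩ := hker
    rw [iSup_le_iff] at hKker
    push_neg at hKker
    obtain ⟨hKcond, hKker⟩ := hKker
    exact hKcond.2 (Subgroup.subset_closure ⟨f, ⟨hf, hKker⟩, hg0⟩)
  · intro h
    exact le_iSup₂ (f := fun (K : Subgroup G) (_ : S.IsNormal K ∧ S.V K ≤ N) => K) H ⟨hH, h⟩
end

section
/- Let S be a supercharacter theory of a finite group G, let N be S-normal, and let g ∈ G. Then g ∈ U(S | N) if and only if every S-character χ with g ∉ ker χ vanishes on G∖N. -/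
open scoped BigOperators Pointwise

variable {G : Type} [Group G] [Fintype G]

/-!
Each irreducible `χ` in a part `X` has `χ(1)·Re χ(g) ≤ χ(1)²`, because the eigenvalues of
`ρ_χ(g)` are roots of unity, with equality only if `ρ_χ(g) = 1`, since `ρ_χ(g)` is
diagonalizable. Summing, `Re σ_X(g) ≤ σ_X(1)` with equality only if `g ∈ ker σ_X`; as `σ_X`
is constant on `S`-classes, kernels of `S`-characters are `S`-normal.

If `χ ∈ Irr(S)` does not vanish at some `h ∉ N`, then every `S`-normal `H` with `V(S|H) ≤ N`
lies in `ker χ`, hence so does `U(S|N)`. Conversely, the intersection `K` of the kernels of the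
`S`-characters whose kernel contains `g` is `S`-normal and contains `g`, and the hypothesis says
precisely that `Irr(S|K)` vanishes off `N`, i.e. `V(S|K) ≤ N`; so `g ∈ K ≤ U(S|N)`.
-/

open Module Polynomial

namespace Module.End

section Field

variable {K M : Type*} [Field K] [AddCommGroup M] [Module K M] {f : End K M} {m : ℕ}

lemma HasEigenvalue.pow_eq_one {μ : K} (hμ : f.HasEigenvalue μ) (hf : f ^ m = 1) :
    μ ^ m = 1 := by
  obtain ⟨v, hv⟩ := hμ.exists_hasEigenvector
  have hvv : μ ^ m • v = (1 : K) • v := by rw [← hv.pow_apply, hf, one_smul, one_apply]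
  exact smul_left_injective K hv.2 hvv

lemma isSemisimple_of_pow_eq_one [CharZero K] (hm : m ≠ 0) (hf : f ^ m = 1) :
    f.IsSemisimple :=
  isSemisimple_of_squarefree_aeval_eq_zero
    (separable_X_pow_sub_C (1 : K) (Nat.cast_ne_zero.mpr hm) one_ne_zero).squarefree
    (by simp [hf])

end Field

section AlgClosed

variable {K V : Type*} [Field K] [IsAlgClosed K] [CharZero K] [AddCommGroup V] [Module K V]
  [FiniteDimensional K V] {f : End K V} {m : ℕ}

lemma eq_one_of_pow_eq_one_of_hasEigenvalue (hm : m ≠ 0) (hf : f ^ m = 1)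
    (h1 : ∀ μ, f.HasEigenvalue μ → μ = 1) : f = 1 := by
  have hss : (f - algebraMap K (End K V) 1).IsSemisimple :=
    isSemisimple_sub_algebraMap_iff.mpr (isSemisimple_of_pow_eq_one hm hf)
  rw [← sub_eq_zero, ← map_one (algebraMap K (End K V)), hss.eq_zero_iff_forall_eigenvalue]
  intro ν hν
  obtain ⟨v, hv⟩ := hν.exists_hasEigenvector
  have hfv : f v = (ν + 1) • v := by
    simpa [sub_eq_iff_eq_add, add_smul] using hv.apply_eq_smul
  simpa using h1 _ (hasEigenvalue_of_hasEigenvector ⟨mem_eigenspace_iff.mpr hfv, hv.2⟩)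

end AlgClosed

section Complex

variable {V : Type*} [AddCommGroup V] [Module ℂ V] {f : End ℂ V} {m : ℕ}

lemma HasEigenvalue.norm_eq_one {μ : ℂ} (hμ : f.HasEigenvalue μ) (hm : m ≠ 0)
    (hf : f ^ m = 1) : ‖μ‖ = 1 :=
  Complex.norm_eq_one_of_pow_eq_one (hμ.pow_eq_one hf) hm

variable [FiniteDimensional ℂ V]

lemma re_le_one_of_mem_roots_charpoly (hm : m ≠ 0) (hf : f ^ m = 1) {μ : ℂ}
    (hμ : μ ∈ f.charpoly.roots) : μ.re ≤ 1 :=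
  have hμf : f.HasEigenvalue μ :=
    (hasEigenvalue_iff_isRoot_charpoly f μ).mpr (isRoot_of_mem_roots hμ)
  (Complex.re_le_norm μ).trans (hμf.norm_eq_one hm hf).le

lemma re_trace_eq_sum_re_roots_charpoly :
    (LinearMap.trace ℂ V f).re = (f.charpoly.roots.map Complex.re).sum := by
  rw [trace_eq_sum_roots_charpoly_of_splits (IsAlgClosed.splits _)]
  exact map_multiset_sum Complex.reAddGroupHom _

lemma sum_map_one_roots_charpoly :
    (f.charpoly.roots.map fun _ ↦ (1 : ℝ)).sum = finrank ℂ V := by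
  rw [Multiset.map_const', Multiset.sum_replicate, nsmul_one, ← LinearMap.charpoly_natDegree f,
    ← splits_iff_card_roots.mp (IsAlgClosed.splits _)]

lemma re_trace_le_finrank (hm : m ≠ 0) (hf : f ^ m = 1) :
    (LinearMap.trace ℂ V f).re ≤ finrank ℂ V := by
  rw [re_trace_eq_sum_re_roots_charpoly, ← sum_map_one_roots_charpoly]
  exact Multiset.sum_map_le_sum_map _ _ fun μ hμ ↦ re_le_one_of_mem_roots_charpoly hm hf hμ

lemma eq_one_of_finrank_le_re_trace (hm : m ≠ 0) (hf : f ^ m = 1)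
    (h : (finrank ℂ V : ℝ) ≤ (LinearMap.trace ℂ V f).re) : f = 1 := by
  refine eq_one_of_pow_eq_one_of_hasEigenvalue hm hf fun μ hμf ↦ ?_
  have hμ : μ ∈ f.charpoly.roots :=
    (mem_roots f.charpoly_monic.ne_zero).mpr ((hasEigenvalue_iff_isRoot_charpoly f μ).mp hμf)
  have hre : μ.re = 1 := by
    refine (re_le_one_of_mem_roots_charpoly hm hf hμ).antisymm (not_lt.mp fun hlt ↦ h.not_gt ?_)
    rw [re_trace_eq_sum_re_roots_charpoly, ← sum_map_one_roots_charpoly]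
    exact Multiset.sum_lt_sum (fun ν hν ↦ re_le_one_of_mem_roots_charpoly hm hf hν)
      ⟨μ, hμ, hlt⟩
  have hnorm := Complex.norm_sub_one_sq_eq_of_norm_eq_one (hμf.norm_eq_one hm hf)
  rwa [hre, sub_self, mul_zero, sq_eq_zero_iff, norm_eq_zero, sub_eq_zero] at hnorm

end Complex

end Module.End

namespace FDRep

variable (V : FDRep ℂ G) (g : G)

lemma ρ_pow_card_eq_one : V.ρ g ^ Fintype.card G = 1 := by
  rw [← map_pow, pow_card_eq_one, map_one]

lemma re_character_le_finrank : (V.character g).re ≤ finrank ℂ V :=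
  End.re_trace_le_finrank Fintype.card_ne_zero (V.ρ_pow_card_eq_one g)

lemma re_character_one_mul_le :
    (V.character 1 * V.character g).re ≤ (V.character 1 * V.character 1).re := by
  simpa [char_one] using
    mul_le_mul_of_nonneg_left (V.re_character_le_finrank g) (Nat.cast_nonneg (finrank ℂ V))

lemma ρ_eq_one_of_re_character_one_mul_eq
    (h : (V.character 1 * V.character g).re = (V.character 1 * V.character 1).re) :
    V.ρ g = 1 := by
  rcases (finrank ℂ V).eq_zero_or_pos with h0 | hpos
  · have : Subsingleton V := finrank_zero_iff.mp h0
    exact Subsingleton.elim _ _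
  · refine End.eq_one_of_finrank_le_re_trace Fintype.card_ne_zero (V.ρ_pow_card_eq_one g) ?_
    have hre : (V.character g).re = finrank ℂ V := by simpa [char_one, hpos.ne'] using h
    exact hre.ge

end FDRep

namespace SCT

variable (S : SCT G)

lemma exists_fdRep_character_eq {X : Finset (G → ℂ)} (hX : X ∈ S.parts) {χ : G → ℂ}
    (hχ : χ ∈ X) : ∃ V : FDRep ℂ G, V.character = χ :=
  let ⟨V, _, hV⟩ := (S.parts_cover χ).mpr ⟨X, hX, hχ⟩
  ⟨V, hV⟩

lemma mem_charKer_superchar_iff {X : Finset (G → ℂ)} (hX : X ∈ S.parts) {g : G} :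
    g ∈ charKer (S.superchar X) ↔ S.superchar X g = S.superchar X 1 := by
  refine ⟨fun hg ↦ by simpa using hg 1, fun hg h ↦ ?_⟩
  have hle : ∀ χ ∈ X, (χ 1 * χ g).re ≤ (χ 1 * χ 1).re := fun χ hχ ↦ by
    obtain ⟨V, rfl⟩ := S.exists_fdRep_character_eq hX hχ
    exact V.re_character_one_mul_le g
  have hsum : ∑ χ ∈ X, (χ 1 * χ g).re = ∑ χ ∈ X, (χ 1 * χ 1).re := by
    simpa only [superchar, Complex.re_sum] using congrArg Complex.re hg
  refine Finset.sum_congr rfl fun χ hχ ↦ ?_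
  have hχg := (Finset.sum_eq_sum_iff_of_le hle).mp hsum χ hχ
  obtain ⟨V, rfl⟩ := S.exists_fdRep_character_eq hX hχ
  simp [FDRep.character, V.ρ_eq_one_of_re_character_one_mul_eq g hχg]

lemma isNormal_charKer {f : G → ℂ} (hf : f ∈ S.Irr) : S.IsNormal (charKer f) := by
  obtain ⟨X, hX, rfl⟩ := hf
  intro x hx k hk
  have hσk : S.superchar X k = S.superchar X x := S.const X hX x k hk
  rw [SetLike.mem_coe, S.mem_charKer_superchar_iff hX, hσk, ← S.mem_charKer_superchar_iff hX]
  exact hx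

lemma isNormal_iInf {ι : Sort*} {H : ι → Subgroup G} (hH : ∀ i, S.IsNormal (H i)) :
    S.IsNormal (⨅ i, H i) := by
  intro x hx k hk
  simp only [SetLike.mem_coe, Subgroup.mem_iInf] at hx ⊢
  exact fun i ↦ hH i x (hx i) hk

-- Stands in for the paper's `⟨g⟩^S`, with which it agrees on kernels of `S`-characters.
def kerClosure (g : G) : Subgroup G :=
  ⨅ f : {f // f ∈ S.Irr ∧ g ∈ charKer f}, charKer f.1

lemma mem_kerClosure_self (g : G) : g ∈ S.kerClosure g :=
  Subgroup.mem_iInf.mpr fun f ↦ f.2.2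

lemma isNormal_kerClosure (g : G) : S.IsNormal (S.kerClosure g) :=
  S.isNormal_iInf fun f ↦ S.isNormal_charKer f.2.1

lemma kerClosure_le_charKer {f : G → ℂ} (hf : f ∈ S.Irr) {g : G} (hg : g ∈ charKer f) :
    S.kerClosure g ≤ charKer f :=
  iInf_le (fun f : {f // f ∈ S.Irr ∧ g ∈ charKer f} ↦ charKer f.1) ⟨f, hf, hg⟩

lemma V_le_iff {H N : Subgroup G} : S.V H ≤ N ↔ ∀ f ∈ S.IrrRel H, ∀ h ∉ N, f h = 0 := by
  constructor
  · intro hV f hf h hh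
    by_contra hfh
    exact hh (hV (Subgroup.subset_closure ⟨f, hf, hfh⟩))
  · intro hV
    refine (Subgroup.closure_le _).mpr ?_
    rintro x ⟨f, hf, hfx⟩
    by_contra hx
    exact hfx (hV f hf x hx)

lemma le_U {H N : Subgroup G} (hH : S.IsNormal H) (hV : S.V H ≤ N) : H ≤ S.U N :=
  le_iSup₂_of_le H ⟨hH, hV⟩ le_rfl

lemma U_le_charKer {N : Subgroup G} {f : G → ℂ} (hf : f ∈ S.Irr) {h : G} (hh : h ∉ N)
    (hfh : f h ≠ 0) : S.U N ≤ charKer f :=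
  iSup₂_le fun _ hH ↦ by_contra fun hle ↦ hfh ((S.V_le_iff.mp hH.2) f ⟨hf, hle⟩ h hh)

end SCT

theorem mem_U_iff_general (S : SCT G) (N : Subgroup G) (g : G) :
    g ∈ S.U N ↔ ∀ f ∈ S.Irr, g ∉ charKer f → ∀ h ∉ N, f h = 0 := by
  refine ⟨fun hg f hf hker h hh ↦ by_contra fun hfh ↦ hker (S.U_le_charKer hf hh hfh hg),
    fun hg ↦ S.le_U (S.isNormal_kerClosure g) (S.V_le_iff.mpr ?_) (S.mem_kerClosure_self g)⟩
  rintro f ⟨hf, hfker⟩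
  exact hg f hf fun hgf ↦ hfker (S.kerClosure_le_charKer hf hgf)

/-- `g ∈ U(S|N)` iff every `S`-character `χ` with `g ∉ ker χ`
vanishes on `G ∖ N`. -/
theorem mem_U_iff (S : SCT G) (N : Subgroup G) (hN : S.IsNormal N) (g : G) :
    g ∈ S.U N ↔ ∀ f ∈ S.Irr, g ∉ charKer f → ∀ h ∉ N, f h = 0 :=
  mem_U_iff_general S N g
end
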